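/- Characterization of CO-definability: Let K be a nonempty class of recursive causal teams over σ. Then K is definable by a CO[σ]-formula (i.e. K = {T : T ⊨^c φ} for some CO[σ]-formula φ) if and only if K is flat and closed under equivalence, where K is flat iff for every causal team (T⁻,F): (T⁻,F) ∈ K iff ({s},F) ∈ K for every s ∈ T⁻; and K is closed under equivalence iff T ∈ K and T ≈ T′ imply T′ ∈ K. -/

import Mathlib

open scoped Classical
set_option linter.unusedSectionVars false

noncomputable section

/-- Assignments of values to variables. -/
abbrev Asg (V : Type) (Val : V → Type) : Type := (v : V) → Val v

/-- A recursive system of functions over the signature `(V, Val)`: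
each endogenous variable `v ∈ En` has a parent set `pa v` and a function `fn v`
computing its value from the values of its parents; recursiveness says that the
induced causal graph is acyclic. -/
structure Sys (V : Type) (Val : V → Type) : Type where
  En : Finset V
  pa : V → Finset V
  fn : (v : V) → ((w : V) → w ∈ pa v → Val w) → Val v
  recursive : ∀ x : V, ¬ Relation.TransGen (fun a b => b ∈ En ∧ a ∈ pa b) x x

variable {V : Type} [Fintype V] [DecidableEq V] [Nonempty V]
  {Val : V → Type} [∀ v, Fintype (Val v)] [∀ v, DecidableEq (Val v)] [∀ v, Nonempty (Val v)]

namespace CausalTeam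

/-- The edge relation of the causal graph of a system of functions. -/
@[reducible] def Edge (F : Sys V Val) (a b : V) : Prop := b ∈ F.En ∧ a ∈ F.pa b

theorem wfEdge (F : Sys V Val) : WellFounded (Edge F) := by
  have h2 : WellFounded (Relation.TransGen (Edge F)) := by
    have hirr : IsIrrefl V (Relation.TransGen (Edge F)) := ⟨F.recursive⟩
    have htr : IsTrans V (Relation.TransGen (Edge F)) :=
      ⟨fun _ _ _ h h' => Relation.TransGen.trans h h'⟩
    exact Finite.wellFounded_of_trans_of_irrefl _
  exact Subrelation.wf (fun h => Relation.TransGen.single h) h2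

/-- An assignment is compatible with a system of functions if every endogenous
variable takes the value prescribed by its function. -/
def Compat (F : Sys V Val) (s : Asg V Val) : Prop :=
  ∀ v ∈ F.En, s v = F.fn v (fun w _ => s w)

/-- The variables occurring in a conjunction of equations `𝐗 = 𝐱`. -/
def ikeys (I : List ((v : V) × Val v)) : List V := I.map Sigma.fst

/-- A conjunction of equations is consistent if it contains no pair `X = x`, `X = x'`
with distinct values `x ≠ x'`. -/
def IConsistent (I : List ((v : V) × Val v)) : Prop :=
  ∀ p ∈ I, ∀ q ∈ I, p.1 = q.1 → p = q

/-- Look up the (first) value assigned to a variable by a conjunction of equations. -/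
def ilookup : List ((v : V) × Val v) → (v : V) → Option (Val v)
  | [], _ => none
  | p :: I, v => if h : p.1 = v then some (h ▸ p.2) else ilookup I v

/-- The intervened system of functions `F_{𝐗=𝐱}`: the restriction of `F` to `En(F) ∖ 𝐗`. -/
def doSys (F : Sys V Val) (I : List ((v : V) × Val v)) : Sys V Val where
  En := F.En.filter (fun v => v ∉ ikeys I)
  pa := F.pa
  fn := F.fn
  recursive := by
    intro x hx
    refine F.recursive x ?_
    have key : ∀ a b, Relation.TransGen (fun a b => b ∈ F.En.filter (fun v => v ∉ ikeys I) ∧ a ∈ F.pa b) a b →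
        Relation.TransGen (fun a b => b ∈ F.En ∧ a ∈ F.pa b) a b := by
      intro a b h
      induction h with
      | single hab => exact Relation.TransGen.single ⟨(Finset.mem_filter.mp hab.1).1, hab.2⟩
      | tail _ hab ih => exact Relation.TransGen.tail ih ⟨(Finset.mem_filter.mp hab.1).1, hab.2⟩
    exact key x x hx

/-- The intervened assignment `s_{𝐗=𝐱}`: variables in `𝐗` get the prescribed values,
exogenous variables outside `𝐗` keep their values, and endogenous variables outside `𝐗`
are recomputed (recursively) by their functions. -/
def doAsg (F : Sys V Val) (I : List ((v : V) × Val v)) (s : Asg V Val) : Asg V Val :=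
  (wfEdge F).fix (C := fun v => Val v) fun v ih =>
    match ilookup I v with
    | some x => x
    | none => if h : v ∈ F.En then F.fn v (fun w hw => ih w ⟨h, hw⟩) else s v

/-- Formulas of the languages CO[σ], CO⩗[σ] and COD[σ]:
equations `X = x`, dependence atoms `=(𝐗;Y)`, negation, conjunction,
tensor disjunction `∨`, intuitionistic disjunction `⩗`, and counterfactuals `𝐗=𝐱 □→ φ`. -/
inductive Fml (V : Type) (Val : V → Type) : Type where
  | eq : (v : V) → Val v → Fml V Val
  | dep : List V → V → Fml V Val
  | neg : Fml V Val → Fml V Val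
  | and : Fml V Val → Fml V Val → Fml V Val
  | or : Fml V Val → Fml V Val → Fml V Val
  | ior : Fml V Val → Fml V Val → Fml V Val
  | cf : List ((v : V) × Val v) → Fml V Val → Fml V Val

/-- CO[σ]-formulas: equations, closed under ¬, ∧, ∨ and counterfactuals. -/
inductive IsCO : Fml V Val → Prop where
  | eq (v : V) (x : Val v) : IsCO (Fml.eq v x)
  | neg {φ} : IsCO φ → IsCO (Fml.neg φ)
  | and {φ ψ} : IsCO φ → IsCO ψ → IsCO (Fml.and φ ψ)
  | or {φ ψ} : IsCO φ → IsCO ψ → IsCO (Fml.or φ ψ)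
  | cf {φ} (I : List ((v : V) × Val v)) : IsCO φ → IsCO (Fml.cf I φ)

/-- CO⩗[σ]-formulas: additionally closed under ⩗; negation applies to CO-formulas only. -/
inductive IsCOV : Fml V Val → Prop where
  | eq (v : V) (x : Val v) : IsCOV (Fml.eq v x)
  | neg {φ} : IsCO φ → IsCOV (Fml.neg φ)
  | and {φ ψ} : IsCOV φ → IsCOV ψ → IsCOV (Fml.and φ ψ)
  | or {φ ψ} : IsCOV φ → IsCOV ψ → IsCOV (Fml.or φ ψ)
  | ior {φ ψ} : IsCOV φ → IsCOV ψ → IsCOV (Fml.ior φ ψ)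
  | cf {φ} (I : List ((v : V) × Val v)) : IsCOV φ → IsCOV (Fml.cf I φ)

/-- COD[σ]-formulas: additionally allow dependence atoms; negation applies to
CO-formulas only. -/
inductive IsCOD : Fml V Val → Prop where
  | eq (v : V) (x : Val v) : IsCOD (Fml.eq v x)
  | dep (X : List V) (Y : V) : IsCOD (Fml.dep X Y)
  | neg {φ} : IsCO φ → IsCOD (Fml.neg φ)
  | and {φ ψ} : IsCOD φ → IsCOD ψ → IsCOD (Fml.and φ ψ)
  | or {φ ψ} : IsCOD φ → IsCOD ψ → IsCOD (Fml.or φ ψ)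
  | cf {φ} (I : List ((v : V) × Val v)) : IsCOD φ → IsCOD (Fml.cf I φ)

/-- Satisfaction over causal teams `(Tm, F)` (the causal team semantics `⊨^c`). -/
def satC : Set (Asg V Val) → Sys V Val → Fml V Val → Prop
  | Tm, _, Fml.eq v x => ∀ s ∈ Tm, s v = x
  | Tm, _, Fml.dep X Y => ∀ s ∈ Tm, ∀ t ∈ Tm, (∀ w ∈ X, s w = t w) → s Y = t Y
  | Tm, F, Fml.neg φ => ∀ s ∈ Tm, ¬ satC {s} F φ
  | Tm, F, Fml.and φ ψ => satC Tm F φ ∧ satC Tm F ψ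
  | Tm, F, Fml.or φ ψ => ∃ T1 T2 : Set (Asg V Val), T1 ∪ T2 = Tm ∧ satC T1 F φ ∧ satC T2 F ψ
  | Tm, F, Fml.ior φ ψ => satC Tm F φ ∨ satC Tm F ψ
  | Tm, F, Fml.cf I φ => IConsistent I → satC (doAsg F I '' Tm) (doSys F I) φ

/-- Satisfaction over generalized causal teams (the semantics `⊨^g`). -/
def satG : Set (Asg V Val × Sys V Val) → Fml V Val → Prop
  | T, Fml.eq v x => ∀ p ∈ T, p.1 v = x
  | T, Fml.dep X Y => ∀ p ∈ T, ∀ q ∈ T, (∀ w ∈ X, p.1 w = q.1 w) → p.1 Y = q.1 Y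
  | T, Fml.neg φ => ∀ p ∈ T, ¬ satG {p} φ
  | T, Fml.and φ ψ => satG T φ ∧ satG T ψ
  | T, Fml.or φ ψ => ∃ T1 T2 : Set (Asg V Val × Sys V Val), T1 ∪ T2 = T ∧ satG T1 φ ∧ satG T2 ψ
  | T, Fml.ior φ ψ => satG T φ ∨ satG T ψ
  | T, Fml.cf I φ => IConsistent I →
      satG ((fun p : Asg V Val × Sys V Val => (doAsg p.2 I p.1, doSys p.2 I)) '' T) φ

/-- A generalized causal team: a set of pairs `(s, F)` with `s` compatible with `F`. -/
def GTOk (T : Set (Asg V Val × Sys V Val)) : Prop := ∀ p ∈ T, Compat p.2 p.1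

/-- The falsum `⊥`, an abbreviation for `X=x ∧ ¬(X=x)`. -/
def fBot : Fml V Val :=
  Fml.and (Fml.eq (Classical.arbitrary V) (Classical.arbitrary (Val (Classical.arbitrary V))))
    (Fml.neg (Fml.eq (Classical.arbitrary V) (Classical.arbitrary (Val (Classical.arbitrary V)))))

/-- A canonical tautology. -/
def fTop : Fml V Val := Fml.neg fBot

/-- Finite conjunction of a list of formulas. -/
def bigAnd : List (Fml V Val) → Fml V Val
  | [] => fTop
  | [φ] => φ
  | φ :: ψ :: rest => Fml.and φ (bigAnd (ψ :: rest))

/-- Finite tensor disjunction of a list of formulas. -/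
def bigOr : List (Fml V Val) → Fml V Val
  | [] => fBot
  | [φ] => φ
  | φ :: ψ :: rest => Fml.or φ (bigOr (ψ :: rest))

/-- Finite intuitionistic disjunction of a list of formulas. -/
def bigIor : List (Fml V Val) → Fml V Val
  | [] => fBot
  | [φ] => φ
  | φ :: ψ :: rest => Fml.ior φ (bigIor (ψ :: rest))

/-- The conjunction of equations describing the restriction of the assignment `t`
to the set `S` of variables. -/
def eqList (S : Finset V) (t : Asg V Val) : List ((v : V) × Val v) :=
  S.toList.map (fun w => ⟨w, t w⟩)

/-- The list of all assignments over the signature. -/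
def allAsg : List (Asg V Val) := (Finset.univ : Finset (Asg V Val)).toList

/-- `η(v)`: for every tuple of values for the variables other than `v`, intervening
with those values forces `v` to take the value computed by `F.fn v` from the parents. -/
def eta (F : Sys V Val) (v : V) : Fml V Val :=
  bigAnd (allAsg.map (fun t =>
    Fml.cf (eqList (Finset.univ.erase v) t) (Fml.eq v (F.fn v (fun w _ => t w)))))

/-- `ξ(v)`: the value of `v` is unaffected by interventions on all other variables. -/
def xi (v : V) : Fml V Val :=
  bigAnd ((Finset.univ : Finset (Val v)).toList.map (fun x =>
    bigAnd (allAsg.map (fun t =>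
      Fml.or (Fml.neg (Fml.eq v x))
        (Fml.cf (eqList (Finset.univ.erase v) t) (Fml.eq v x))))))

/-- `Cn(F)`: the endogenous variables of `F` governed by a constant function. -/
def Cn (F : Sys V Val) : Finset V :=
  F.En.filter (fun v => ∃ c : Val v, ∀ p, F.fn v p = c)

/-- The non-constant endogenous variables `En(F) ∖ Cn(F)`. -/
def strictEn (F : Sys V Val) : Finset V := F.En \ Cn F

/-- `F_v ∼ G_v`: equivalence of the two functions for `v` up to dummy arguments. -/
def SimFn (F G : Sys V Val) (v : V) : Prop :=
  ∀ (x : (w : V) → w ∈ F.pa v ∩ G.pa v → Val w)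
    (y : (w : V) → w ∈ F.pa v \ G.pa v → Val w)
    (z : (w : V) → w ∈ G.pa v \ F.pa v → Val w),
    F.fn v (fun w hw =>
      if h : w ∈ G.pa v then x w (Finset.mem_inter.mpr ⟨hw, h⟩)
      else y w (Finset.mem_sdiff.mpr ⟨hw, h⟩)) =
    G.fn v (fun w hw =>
      if h : w ∈ F.pa v then x w (Finset.mem_inter.mpr ⟨h, hw⟩)
      else z w (Finset.mem_sdiff.mpr ⟨hw, h⟩))

/-- `F ∼ G`: equivalence of systems of functions up to dummy arguments. -/
def Sim (F G : Sys V Val) : Prop :=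
  strictEn F = strictEn G ∧ ∀ v ∈ strictEn F, SimFn F G v

/-- The CO[σ]-formula `Φ^F` characterizing the function component `F` up to `∼`. -/
def Phi (F : Sys V Val) : Fml V Val :=
  Fml.and (bigAnd (F.En.toList.map (fun v => eta F v)))
    (bigAnd ((((Finset.univ : Finset V) \ F.En) ∪ Cn F).toList.map (fun v => xi v)))

/-- The CO[σ]-formula `Θ^A`: the team component is included in `A`. -/
def Theta (A : Finset (Asg V Val)) : Fml V Val :=
  bigOr (A.toList.map (fun s =>
    bigAnd ((Finset.univ : Finset V).toList.map (fun v => Fml.eq v (s v)))))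

/-- `χ₁`: all variables are constant in the team. -/
def chi1 : Fml V Val :=
  bigAnd ((Finset.univ : Finset V).toList.map (fun v => Fml.dep [] v))

/-- `χ_k`: the team has at most `k` elements. -/
def chi : ℕ → Fml V Val
  | 0 => fBot
  | 1 => chi1
  | (k+2) => Fml.or chi1 (chi (k+1))


/-! CO-formulas are flat: tensor disjunction can split a team pointwise, and every other
connective acts pointwise already. Their truth is also invariant under `≈`, because from an
assignment compatible with both `F` and `G`, where `F ∼ G`, every intervention yields the same
assignment (the two systems agree on the non-constant variables, and a compatible assignment
already carries the values of the constant and exogenous ones).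

Conversely, the signature is finite, so there are finitely many assignments and systems. On a
singleton team `Θ^A` says that the assignment lies in `A`, and `Φ^F` says that the system is
`∼ F`: `η(v)` and `ξ(v)` read off the function of `v` by intervening on all other variables.
Hence a flat, `≈`-closed `K` is defined by `⋁_F (Θ^{A_F} ∧ Φ^F)` with
`A_F = {s | ({s}, F) ∈ K}`. -/

theorem notMem_pa_self {F : Sys V Val} {v : V} (h : v ∈ F.En) : v ∉ F.pa v :=
  fun hpa => F.recursive v (Relation.TransGen.single ⟨h, hpa⟩)

theorem fn_congr (F : Sys V Val) (v : V) {a b : Asg V Val} (h : ∀ w ∈ F.pa v, a w = b w) :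
    F.fn v (fun w _ => a w) = F.fn v (fun w _ => b w) := by
  congr 1
  funext w hw
  exact h w hw

theorem restrict_surjective (S : Finset V) :
    Function.Surjective (fun (t : Asg V Val) (w : V) (_ : w ∈ S) => t w) := fun p =>
  ⟨fun w => if h : w ∈ S then p w h else Classical.arbitrary _, by funext w hw; simp [hw]⟩

theorem mem_Cn_iff {F : Sys V Val} {v : V} :
    v ∈ Cn F ↔ v ∈ F.En ∧ ∃ c : Val v, ∀ t : Asg V Val, F.fn v (fun w _ => t w) = c := by
  simp only [Cn, Finset.mem_filter, (restrict_surjective (F.pa v)).forall]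

theorem mem_strictEn_iff {F : Sys V Val} {v : V} :
    v ∈ strictEn F ↔ v ∈ F.En ∧ v ∉ Cn F :=
  Finset.mem_sdiff

theorem simFn_iff {F G : Sys V Val} {v : V} :
    SimFn F G v ↔ ∀ t : Asg V Val, F.fn v (fun w _ => t w) = G.fn v (fun w _ => t w) := by
  constructor
  · intro h t
    simpa using h (fun w _ => t w) (fun w _ => t w) (fun w _ => t w)
  · intro h x y z
    let t : Asg V Val := fun w =>
      if h₁ : w ∈ F.pa v then
        if h₂ : w ∈ G.pa v then x w (Finset.mem_inter.2 ⟨h₁, h₂⟩)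
        else y w (Finset.mem_sdiff.2 ⟨h₁, h₂⟩)
      else if h₂ : w ∈ G.pa v then z w (Finset.mem_sdiff.2 ⟨h₂, h₁⟩)
      else Classical.arbitrary _
    convert h t using 2 <;> funext w hw
    · simp [t, hw]
    · by_cases h₁ : w ∈ F.pa v <;> simp [t, hw, h₁]

theorem doAsg_of_ilookup_eq_some {F : Sys V Val} {I : List ((v : V) × Val v)} {s : Asg V Val}
    {v : V} {x : Val v} (h : ilookup I v = some x) : doAsg F I s v = x := by
  rw [doAsg, WellFounded.fix_eq, h]

theorem doAsg_of_ilookup_eq_none_of_mem {F : Sys V Val} {I : List ((v : V) × Val v)}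
    {s : Asg V Val} {v : V} (h : ilookup I v = none) (hv : v ∈ F.En) :
    doAsg F I s v = F.fn v (fun w _ => doAsg F I s w) := by
  rw [doAsg, WellFounded.fix_eq, h, dif_pos hv]

theorem doAsg_of_ilookup_eq_none_of_notMem {F : Sys V Val} {I : List ((v : V) × Val v)}
    {s : Asg V Val} {v : V} (h : ilookup I v = none) (hv : v ∉ F.En) : doAsg F I s v = s v := by
  rw [doAsg, WellFounded.fix_eq, h, dif_neg hv]

theorem ilookup_eq_none_iff {I : List ((v : V) × Val v)} {v : V} :
    ilookup I v = none ↔ v ∉ ikeys I := by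
  induction I with
  | nil => simp [ilookup, ikeys]
  | cons p I ih =>
    by_cases h : p.1 = v
    · simp [ilookup, ikeys, h]
    · simp [ilookup, ikeys, h, ih, Ne.symm h]

theorem compat_doAsg (F : Sys V Val) (I : List ((v : V) × Val v)) (s : Asg V Val) :
    Compat (doSys F I) (doAsg F I s) := fun _ hv =>
  let hv' := Finset.mem_filter.1 hv
  doAsg_of_ilookup_eq_none_of_mem (ilookup_eq_none_iff.2 hv'.2) hv'.1

theorem doAsg_of_notMem_strictEn {F : Sys V Val} {I : List ((v : V) × Val v)}
    {s : Asg V Val} {v : V} (hs : Compat F s) (h : ilookup I v = none) (hv : v ∉ strictEn F) :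
    doAsg F I s v = s v := by
  by_cases hEn : v ∈ F.En
  · obtain ⟨c, hc⟩ := (mem_Cn_iff.1 (by simpa [mem_strictEn_iff, hEn] using hv)).2
    rw [doAsg_of_ilookup_eq_none_of_mem h hEn, hs v hEn, hc, hc]
  · exact doAsg_of_ilookup_eq_none_of_notMem h hEn

theorem doAsg_eq_of_sim {F G : Sys V Val} (h : Sim F G) {s : Asg V Val}
    (hsF : Compat F s) (hsG : Compat G s) (I : List ((v : V) × Val v)) :
    doAsg F I s = doAsg G I s := by
  funext v
  induction v using (wfEdge F).induction with
  | _ v ih =>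
    rcases hl : ilookup I v with _ | x
    · by_cases hv : v ∈ strictEn F
      · have hvF := (mem_strictEn_iff.1 hv).1
        have hvG := (mem_strictEn_iff.1 (h.1 ▸ hv)).1
        rw [doAsg_of_ilookup_eq_none_of_mem hl hvF, doAsg_of_ilookup_eq_none_of_mem hl hvG,
          fn_congr F v fun w hw => ih w ⟨hvF, hw⟩]
        exact simFn_iff.1 (h.2 v hv) _
      · rw [doAsg_of_notMem_strictEn hsF hl hv, doAsg_of_notMem_strictEn hsG hl (h.1 ▸ hv)]
    · rw [doAsg_of_ilookup_eq_some hl, doAsg_of_ilookup_eq_some hl]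

theorem strictEn_doSys (F : Sys V Val) (I : List ((v : V) × Val v)) :
    strictEn (doSys F I) = (strictEn F).filter (fun v => v ∉ ikeys I) := by
  ext v
  rw [mem_strictEn_iff, Finset.mem_filter, mem_strictEn_iff, mem_Cn_iff, mem_Cn_iff]
  simp only [doSys, Finset.mem_filter]
  tauto

theorem Sim.doSys {F G : Sys V Val} (h : Sim F G) (I : List ((v : V) × Val v)) :
    Sim (doSys F I) (doSys G I) := by
  refine ⟨by rw [strictEn_doSys, strictEn_doSys, h.1], fun v hv => ?_⟩
  rw [strictEn_doSys, Finset.mem_filter] at hv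
  exact h.2 v hv.1

theorem satC_empty {φ : Fml V Val} (hφ : IsCO φ) (F : Sys V Val) : satC ∅ F φ := by
  induction hφ generalizing F with
  | eq | neg => simp [satC]
  | and _ _ ih₁ ih₂ => exact ⟨ih₁ F, ih₂ F⟩
  | or _ _ ih₁ ih₂ => exact ⟨∅, ∅, Set.union_empty _, ih₁ F, ih₂ F⟩
  | cf I _ ih => exact fun _ => by simpa using ih _

theorem satC_flat {φ : Fml V Val} (hφ : IsCO φ) (Tm : Set (Asg V Val)) (F : Sys V Val) :
    satC Tm F φ ↔ ∀ s ∈ Tm, satC {s} F φ := by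
  induction hφ generalizing Tm F with
  | eq | neg => simp [satC]
  | and _ _ ih₁ ih₂ =>
    simp only [satC, ih₁ Tm, ih₂ Tm]
    exact forall₂_and.symm
  | @or φ ψ hφ hψ ih₁ ih₂ =>
    constructor
    · rintro ⟨T₁, T₂, rfl, h₁, h₂⟩ s (hs | hs)
      · exact ⟨{s}, ∅, Set.union_empty _, (ih₁ T₁ F).1 h₁ s hs, satC_empty hψ F⟩
      · exact ⟨∅, {s}, Set.empty_union _, satC_empty hφ F, (ih₂ T₂ F).1 h₂ s hs⟩
    · intro h
      refine ⟨{s ∈ Tm | satC {s} F φ}, {s ∈ Tm | satC {s} F ψ}, ?_,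
        (ih₁ _ F).2 fun s hs => hs.2, (ih₂ _ F).2 fun s hs => hs.2⟩
      ext s
      simp only [Set.mem_union, Set.mem_ofPred_eq, ← and_or_left, and_iff_left_iff_imp]
      intro hs
      obtain ⟨S₁, S₂, hS, h₁, h₂⟩ := h s hs
      rcases (hS.symm ▸ rfl : s ∈ S₁ ∪ S₂) with hs' | hs'
      · exact Or.inl ((ih₁ S₁ F).1 h₁ s hs')
      · exact Or.inr ((ih₂ S₂ F).1 h₂ s hs')
  | cf I _ ih =>
    show (IConsistent I → _) ↔ ∀ s ∈ Tm, IConsistent I → _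
    simp only [Set.image_singleton]
    rw [ih (doAsg F I '' Tm), Set.forall_mem_image]
    exact ⟨fun h s hs hI => h hI hs, fun h hI s hs => h s hs hI⟩

theorem satC_or_singleton {φ ψ : Fml V Val} (hφ : IsCO φ) (hψ : IsCO ψ)
    {s : Asg V Val} {F : Sys V Val} :
    satC {s} F (Fml.or φ ψ) ↔ satC {s} F φ ∨ satC {s} F ψ := by
  constructor
  · rintro ⟨T₁, T₂, hT, h₁, h₂⟩
    rcases (hT.symm ▸ rfl : s ∈ T₁ ∪ T₂) with hs | hs
    · exact Or.inl ((satC_flat hφ T₁ F).1 h₁ s hs)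
    · exact Or.inr ((satC_flat hψ T₂ F).1 h₂ s hs)
  · rintro (h | h)
    · exact ⟨{s}, ∅, Set.union_empty _, h, satC_empty hψ F⟩
    · exact ⟨∅, {s}, Set.empty_union _, satC_empty hφ F, h⟩

theorem satC_congr_sim {φ : Fml V Val} (hφ : IsCO φ) {F G : Sys V Val} (h : Sim F G)
    {Tm : Set (Asg V Val)} (hTm : ∀ s ∈ Tm, Compat F s ∧ Compat G s) :
    satC Tm F φ ↔ satC Tm G φ := by
  induction hφ generalizing F G Tm with
  | eq => exact Iff.rfl
  | neg _ ih =>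
    exact forall₂_congr fun s hs =>
      not_congr (ih h fun _ hu => Set.mem_singleton_iff.1 hu ▸ hTm s hs)
  | and _ _ ih₁ ih₂ => exact and_congr (ih₁ h hTm) (ih₂ h hTm)
  | or _ _ ih₁ ih₂ =>
    exact exists₂_congr fun T₁ T₂ => and_congr_right fun hT =>
      and_congr (ih₁ h fun s hs => hTm s (hT ▸ Or.inl hs))
        (ih₂ h fun s hs => hTm s (hT ▸ Or.inr hs))
  | cf I _ ih =>
    have hdo : ∀ s ∈ Tm, doAsg F I s = doAsg G I s :=
      fun s hs => doAsg_eq_of_sim h (hTm s hs).1 (hTm s hs).2 I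
    show (IConsistent I → _) ↔ (IConsistent I → _)
    rw [Set.image_congr hdo]
    refine imp_congr_right fun _ => ih (h.doSys I) ?_
    rintro _ ⟨s, hs, rfl⟩
    exact ⟨hdo s hs ▸ compat_doAsg F I s, compat_doAsg G I s⟩

theorem isCO_fBot : IsCO (fBot : Fml V Val) := .and (.eq _ _) (.neg (.eq _ _))

theorem isCO_bigAnd {L : List (Fml V Val)} (h : ∀ ψ ∈ L, IsCO ψ) : IsCO (bigAnd L) := by
  fun_induction bigAnd L with
  | case1 => exact .neg isCO_fBot
  | case2 φ => exact h φ (by simp)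
  | case3 φ ψ rest ih => exact .and (h φ (by simp)) (ih fun χ hχ => h χ (by simp_all))

theorem isCO_bigOr {L : List (Fml V Val)} (h : ∀ ψ ∈ L, IsCO ψ) : IsCO (bigOr L) := by
  fun_induction bigOr L with
  | case1 => exact isCO_fBot
  | case2 φ => exact h φ (by simp)
  | case3 φ ψ rest ih => exact .or (h φ (by simp)) (ih fun χ hχ => h χ (by simp_all))

theorem isCO_bigAnd_map {α : Type*} {l : List α} {f : α → Fml V Val} (h : ∀ a, IsCO (f a)) :
    IsCO (bigAnd (l.map f)) :=
  isCO_bigAnd (List.forall_mem_map.2 fun a _ => h a)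

theorem isCO_bigOr_map {α : Type*} {l : List α} {f : α → Fml V Val} (h : ∀ a, IsCO (f a)) :
    IsCO (bigOr (l.map f)) :=
  isCO_bigOr (List.forall_mem_map.2 fun a _ => h a)

theorem not_satC_fBot_singleton (s : Asg V Val) (F : Sys V Val) : ¬ satC {s} F fBot :=
  fun h => h.2 s rfl h.1

theorem satC_bigAnd {L : List (Fml V Val)} {Tm : Set (Asg V Val)} {F : Sys V Val} :
    satC Tm F (bigAnd L) ↔ ∀ ψ ∈ L, satC Tm F ψ := by
  fun_induction bigAnd L with
  | case1 => exact iff_of_true (fun s _ => not_satC_fBot_singleton s F) (by simp)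
  | case2 => simp
  | case3 φ ψ rest ih => simp only [satC, ih, List.forall_mem_cons]

theorem satC_bigOr_singleton {L : List (Fml V Val)} (hL : ∀ ψ ∈ L, IsCO ψ)
    {s : Asg V Val} {F : Sys V Val} :
    satC {s} F (bigOr L) ↔ ∃ ψ ∈ L, satC {s} F ψ := by
  fun_induction bigOr L with
  | case1 => simpa using not_satC_fBot_singleton s F
  | case2 => simp
  | case3 φ ψ rest ih =>
    have hrest : ∀ χ ∈ ψ :: rest, IsCO χ := fun χ hχ => hL χ (by simp_all)
    rw [satC_or_singleton (hL φ (by simp)) (isCO_bigOr hrest), ih hrest]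
    simp

theorem satC_eq_singleton {s : Asg V Val} {F : Sys V Val} {v : V} {x : Val v} :
    satC {s} F (Fml.eq v x) ↔ s v = x := by
  simp [satC]

theorem satC_neg_singleton {s : Asg V Val} {F : Sys V Val} {φ : Fml V Val} :
    satC {s} F (Fml.neg φ) ↔ ¬ satC {s} F φ := by
  simp [satC]

theorem satC_cf_singleton {s : Asg V Val} {F : Sys V Val} {I : List ((v : V) × Val v)}
    {φ : Fml V Val} (hI : IConsistent I) :
    satC {s} F (Fml.cf I φ) ↔ satC {doAsg F I s} (doSys F I) φ := by
  simp [satC, hI]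

theorem ilookup_map_mk (t : Asg V Val) (l : List V) (v : V) :
    ilookup (l.map fun w => (⟨w, t w⟩ : (v : V) × Val v)) v =
      if v ∈ l then some (t v) else none := by
  induction l with
  | nil => rfl
  | cons a l ih =>
    by_cases h : a = v
    · subst h; simp [ilookup]
    · simp [ilookup, h, ih, Ne.symm h]

theorem ilookup_eqList (S : Finset V) (t : Asg V Val) (v : V) :
    ilookup (eqList S t) v = if v ∈ S then some (t v) else none := by
  simp [eqList, ilookup_map_mk]

theorem iconsistent_eqList (S : Finset V) (t : Asg V Val) : IConsistent (eqList S t) := by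
  simp only [IConsistent, eqList, List.mem_map]
  rintro _ ⟨a, _, rfl⟩ _ ⟨b, _, rfl⟩ (rfl : a = b)
  rfl

def response (F : Sys V Val) (s : Asg V Val) (v : V) (t : Asg V Val) : Val v :=
  if v ∈ F.En then F.fn v (fun w _ => t w) else s v

theorem response_of_mem {F : Sys V Val} {s : Asg V Val} {v : V} (h : v ∈ F.En)
    (t : Asg V Val) : response F s v t = F.fn v (fun w _ => t w) :=
  if_pos h

theorem doAsg_eqList_erase_self (F : Sys V Val) (t s : Asg V Val) (v : V) :
    doAsg F (eqList (Finset.univ.erase v) t) s v = response F s v t := by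
  have hv : ilookup (eqList (Finset.univ.erase v) t) v = none := by simp [ilookup_eqList]
  unfold response
  split_ifs with hEn
  · rw [doAsg_of_ilookup_eq_none_of_mem hv hEn]
    refine fn_congr F v fun w hw => doAsg_of_ilookup_eq_some ?_
    have hwv : w ≠ v := fun h => notMem_pa_self hEn (h ▸ hw)
    simp [ilookup_eqList, hwv]
  · exact doAsg_of_ilookup_eq_none_of_notMem hv hEn

theorem satC_eta_singleton {s : Asg V Val} {F F₀ : Sys V Val} {v : V} :
    satC {s} F (eta F₀ v) ↔ ∀ t : Asg V Val, response F s v t = F₀.fn v (fun w _ => t w) := by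
  simp [eta, allAsg, satC_bigAnd, satC_cf_singleton, iconsistent_eqList, satC_eq_singleton,
    doAsg_eqList_erase_self]

theorem satC_xi_singleton {s : Asg V Val} {F : Sys V Val} {v : V} :
    satC {s} F (xi v) ↔ ∀ t : Asg V Val, response F s v t = s v := by
  simp only [xi, allAsg, satC_bigAnd, List.forall_mem_map, Finset.mem_toList, Finset.mem_univ,
    true_implies, satC_or_singleton (.neg (.eq _ _)) (.cf _ (.eq _ _)), satC_neg_singleton,
    satC_cf_singleton (iconsistent_eqList _ _), satC_eq_singleton, doAsg_eqList_erase_self,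
    ← imp_iff_not_or]
  exact ⟨fun h t => h (s v) t rfl, fun h x t hx => hx ▸ h t⟩

theorem forall_response_eq_self_iff {s : Asg V Val} {F : Sys V Val} {v : V} (hs : Compat F s) :
    (∀ t : Asg V Val, response F s v t = s v) ↔ v ∉ strictEn F := by
  by_cases hEn : v ∈ F.En
  · simp only [response_of_mem hEn, hEn, mem_strictEn_iff, mem_Cn_iff, true_and, not_not]
    exact ⟨fun h => ⟨s v, h⟩, fun ⟨c, hc⟩ t => by rw [hc, hs v hEn, hc]⟩
  · simp [response, hEn, mem_strictEn_iff]

theorem isCO_eta (F : Sys V Val) (v : V) : IsCO (eta F v) :=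
  isCO_bigAnd_map fun _ => .cf _ (.eq _ _)

theorem isCO_xi (v : V) : IsCO (xi v : Fml V Val) :=
  isCO_bigAnd_map fun _ => isCO_bigAnd_map fun _ => .or (.neg (.eq _ _)) (.cf _ (.eq _ _))

theorem isCO_Phi (F : Sys V Val) : IsCO (Phi F) :=
  .and (isCO_bigAnd_map (isCO_eta F)) (isCO_bigAnd_map isCO_xi)

theorem satC_Phi_singleton {s : Asg V Val} {F F₀ : Sys V Val} :
    satC {s} F (Phi F₀) ↔ (∀ v ∈ F₀.En, satC {s} F (eta F₀ v)) ∧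
      ∀ v ∈ Finset.univ \ F₀.En ∪ Cn F₀, satC {s} F (xi v) := by
  simp only [Phi, satC, satC_bigAnd, List.forall_mem_map, Finset.mem_toList]

theorem satC_Phi_self {s : Asg V Val} {F : Sys V Val} (hs : Compat F s) :
    satC {s} F (Phi F) := by
  refine satC_Phi_singleton.2 ⟨fun v hv => satC_eta_singleton.2 (response_of_mem hv),
    fun v hv => satC_xi_singleton.2 ((forall_response_eq_self_iff hs).2 ?_)⟩
  simp only [Finset.mem_union, Finset.mem_sdiff, Finset.mem_univ, true_and] at hv
  rw [mem_strictEn_iff]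
  tauto

theorem sim_of_satC_Phi {s : Asg V Val} {F F₀ : Sys V Val} (hs : Compat F s)
    (h : satC {s} F (Phi F₀)) : Sim F₀ F := by
  obtain ⟨hη, hξ⟩ := satC_Phi_singleton.1 h
  have hnot : ∀ v ∉ strictEn F₀, v ∉ strictEn F := fun v hv =>
    (forall_response_eq_self_iff hs).1 <| satC_xi_singleton.1 <| hξ v <| by
      simp only [Finset.mem_union, Finset.mem_sdiff, Finset.mem_univ, true_and]
      rw [mem_strictEn_iff] at hv
      tauto
  have hmem : ∀ v ∈ strictEn F₀, v ∈ strictEn F ∧ SimFn F₀ F v := by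
    intro v hv
    obtain ⟨hEn₀, hCn₀⟩ := mem_strictEn_iff.1 hv
    have hresp := satC_eta_singleton.1 (hη v hEn₀)
    have hvF : v ∈ strictEn F := by
      by_contra hvF
      have hconst := (forall_response_eq_self_iff hs).2 hvF
      exact hCn₀ (mem_Cn_iff.2 ⟨hEn₀, s v, fun t => (hresp t).symm.trans (hconst t)⟩)
    refine ⟨hvF, simFn_iff.2 fun t => ?_⟩
    rw [← hresp t, response_of_mem (mem_strictEn_iff.1 hvF).1]
  exact ⟨Finset.Subset.antisymm (fun v hv => (hmem v hv).1)
    (fun v => not_imp_not.1 (hnot v)), fun v hv => (hmem v hv).2⟩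

theorem isCO_eqs (t : Asg V Val) :
    IsCO (bigAnd ((Finset.univ : Finset V).toList.map fun v => Fml.eq v (t v))) :=
  isCO_bigAnd_map fun v => .eq v (t v)

theorem satC_eqs_singleton {s t : Asg V Val} {F : Sys V Val} :
    satC {s} F (bigAnd ((Finset.univ : Finset V).toList.map fun v => Fml.eq v (t v))) ↔
      s = t := by
  simp [satC_bigAnd, satC_eq_singleton, funext_iff]

theorem isCO_Theta (A : Finset (Asg V Val)) : IsCO (Theta A) :=
  isCO_bigOr_map isCO_eqs

theorem satC_Theta_singleton {s : Asg V Val} {F : Sys V Val} {A : Finset (Asg V Val)} :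
    satC {s} F (Theta A) ↔ s ∈ A := by
  rw [Theta, satC_bigOr_singleton (List.forall_mem_map.2 fun t _ => isCO_eqs t)]
  simp [satC_eqs_singleton]

instance : Finite (Sys V Val) := by
  refine Finite.of_injective
    (fun F : Sys V Val => (F.En, F.pa, fun v (t : Asg V Val) => F.fn v fun w _ => t w)) ?_
  rintro ⟨En, pa, fn, _⟩ ⟨En', pa', fn', _⟩ h
  simp only [Prod.mk.injEq] at h
  obtain ⟨rfl, rfl, h⟩ := h
  obtain rfl : fn = fn' := funext fun v => funext <|
    (restrict_surjective (pa v)).forall.2 fun t => congrFun (congrFun h v) t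
  rfl

noncomputable instance : Fintype (Sys V Val) := Fintype.ofFinite _

def IsDefinedBy (K : Set (Set (Asg V Val) × Sys V Val)) (φ : Fml V Val) : Prop :=
  ∀ (Tm : Set (Asg V Val)) (F : Sys V Val), (∀ s ∈ Tm, Compat F s) →
    ((Tm, F) ∈ K ↔ satC Tm F φ)

def IsFlat (K : Set (Set (Asg V Val) × Sys V Val)) : Prop :=
  ∀ (Tm : Set (Asg V Val)) (F : Sys V Val), (∀ s ∈ Tm, Compat F s) →
    ((Tm, F) ∈ K ↔ ∀ s ∈ Tm, (({s} : Set (Asg V Val)), F) ∈ K)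

def IsClosedUnderEquiv (K : Set (Set (Asg V Val) × Sys V Val)) : Prop :=
  ∀ p ∈ K, ∀ (Tm : Set (Asg V Val)) (G : Sys V Val), (∀ s ∈ Tm, Compat G s) →
    (p.1 = Tm ∧ Sim p.2 G) → (Tm, G) ∈ K

theorem IsDefinedBy.isFlat {K : Set (Set (Asg V Val) × Sys V Val)} {φ : Fml V Val}
    (hφ : IsCO φ) (h : IsDefinedBy K φ) : IsFlat K := by
  intro Tm F hTm
  rw [h Tm F hTm, satC_flat hφ]
  exact forall₂_congr fun s hs => (h {s} F (by simpa using hTm s hs)).symm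

theorem IsDefinedBy.isClosedUnderEquiv {K : Set (Set (Asg V Val) × Sys V Val)} {φ : Fml V Val}
    (hK : ∀ p ∈ K, ∀ s ∈ p.1, Compat p.2 s) (hφ : IsCO φ) (h : IsDefinedBy K φ) :
    IsClosedUnderEquiv K := by
  rintro ⟨Tm, F⟩ hp _ G hG ⟨rfl, hFG⟩
  have hF := hK _ hp
  rw [h Tm G hG, ← satC_congr_sim hφ hFG fun s hs => ⟨hF s hs, hG s hs⟩, ← h Tm F hF]
  exact hp

def charFml (K : Set (Set (Asg V Val) × Sys V Val)) : Fml V Val :=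
  bigOr ((Finset.univ : Finset (Sys V Val)).toList.map fun F =>
    Fml.and (Theta (Finset.univ.filter fun s => (({s} : Set (Asg V Val)), F) ∈ K)) (Phi F))

theorem isCO_charFml (K : Set (Set (Asg V Val) × Sys V Val)) : IsCO (charFml K) :=
  isCO_bigOr_map fun F => .and (isCO_Theta _) (isCO_Phi F)

theorem satC_charFml_singleton {K : Set (Set (Asg V Val) × Sys V Val)} {s : Asg V Val}
    {G : Sys V Val} :
    satC {s} G (charFml K) ↔ ∃ F, (({s} : Set (Asg V Val)), F) ∈ K ∧ satC {s} G (Phi F) := by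
  rw [charFml, satC_bigOr_singleton
    (List.forall_mem_map.2 fun F _ => .and (isCO_Theta _) (isCO_Phi F))]
  simp [satC, satC_Theta_singleton]

theorem isDefinedBy_charFml {K : Set (Set (Asg V Val) × Sys V Val)} (hflat : IsFlat K)
    (hclosed : IsClosedUnderEquiv K) : IsDefinedBy K (charFml K) := by
  intro Tm G hG
  rw [hflat Tm G hG, satC_flat (isCO_charFml K)]
  refine forall₂_congr fun s hs => ?_
  rw [satC_charFml_singleton]
  exact ⟨fun hsG => ⟨G, hsG, satC_Phi_self (hG s hs)⟩, fun ⟨F, hsF, hΦ⟩ =>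
    hclosed _ hsF {s} G (by simpa using hG s hs) ⟨rfl, sim_of_satC_Phi (hG s hs) hΦ⟩⟩

end CausalTeam

open CausalTeam

theorem CO_definability_characterization_general {V : Type} [Fintype V] [DecidableEq V] [Nonempty V]
    {Val : V → Type} [∀ v, Fintype (Val v)] [∀ v, DecidableEq (Val v)] [∀ v, Nonempty (Val v)]
    (K : Set (Set (Asg V Val) × Sys V Val))
    (hK : ∀ p ∈ K, ∀ s ∈ p.1, Compat p.2 s) :
    (∃ φ : Fml V Val, IsCO φ ∧
        ∀ (Tm : Set (Asg V Val)) (F : Sys V Val), (∀ s ∈ Tm, Compat F s) →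
          ((Tm, F) ∈ K ↔ satC Tm F φ)) ↔
    ((∀ (Tm : Set (Asg V Val)) (F : Sys V Val), (∀ s ∈ Tm, Compat F s) →
        ((Tm, F) ∈ K ↔ ∀ s ∈ Tm, (({s} : Set (Asg V Val)), F) ∈ K)) ∧
     (∀ p ∈ K, ∀ (Tm : Set (Asg V Val)) (G : Sys V Val), (∀ s ∈ Tm, Compat G s) →
        (p.1 = Tm ∧ Sim p.2 G) → (Tm, G) ∈ K)) := by
  constructor
  · rintro ⟨φ, hφ, hdef⟩
    exact ⟨IsDefinedBy.isFlat hφ hdef, IsDefinedBy.isClosedUnderEquiv hK hφ hdef⟩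
  · rintro ⟨hflat, hclosed⟩
    exact ⟨charFml K, isCO_charFml K, isDefinedBy_charFml hflat hclosed⟩

/-- **Characterization of CO-definability**: a nonempty class `K` of recursive causal
teams over σ is definable by a CO[σ]-formula iff it is flat and closed under
equivalence. -/
theorem CO_definability_characterization {V : Type} [Fintype V] [DecidableEq V] [Nonempty V]
    {Val : V → Type} [∀ v, Fintype (Val v)] [∀ v, DecidableEq (Val v)] [∀ v, Nonempty (Val v)]
    (K : Set (Set (Asg V Val) × Sys V Val))
    (hK : ∀ p ∈ K, ∀ s ∈ p.1, Compat p.2 s) (hKne : K.Nonempty) :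
    (∃ φ : Fml V Val, IsCO φ ∧
        ∀ (Tm : Set (Asg V Val)) (F : Sys V Val), (∀ s ∈ Tm, Compat F s) →
          ((Tm, F) ∈ K ↔ satC Tm F φ)) ↔
    ((∀ (Tm : Set (Asg V Val)) (F : Sys V Val), (∀ s ∈ Tm, Compat F s) →
        ((Tm, F) ∈ K ↔ ∀ s ∈ Tm, (({s} : Set (Asg V Val)), F) ∈ K)) ∧
     (∀ p ∈ K, ∀ (Tm : Set (Asg V Val)) (G : Sys V Val), (∀ s ∈ Tm, Compat G s) →
        (p.1 = Tm ∧ Sim p.2 G) → (Tm, G) ∈ K)) :=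
  CO_definability_characterization_general K hK
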